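/- arXiv:2012.10896 — 4 statements merged into one kernel-verified Lean document; each statement's English description precedes it below -/
import Mathlib

section
/- Let μ_{n,s} = E[N_n^s] where N_n is the number of cycles of a uniformly random permutation of {1,...,n}, with convention μ_{0,s} = 0. Then for all integers n, s ≥ 1, μ_{n,s} = 1 + (1/n) · Σ_{r=1}^{s} Σ_{j=1}^{n-1} C(s,r) · μ_{j,r}, where C(s,r) is the binomial coefficient. -/
open scoped Classical

/-- The number of cycles of a permutation of `Fin n`, counting fixed points
as cycles of length one. -/
noncomputable def numCycles {n : ℕ} (π : Equiv.Perm (Fin n)) : ℕ :=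
  π.cycleType.card + (n - π.support.card)

/-- `μ_{n,s}`: the `s`-th moment of the number of cycles of a uniformly random
permutation of `Fin n` (for `n = 0` this is `0` when `s ≥ 1`). -/
noncomputable def cycMoment (n s : ℕ) : ℝ :=
  (∑ π : Equiv.Perm (Fin n), ((numCycles π : ℝ)) ^ s) / (n.factorial : ℝ)

/-!
Removing the point `0` from a permutation `π` of `Fin (n + 1)` (`Equiv.Perm.decomposeFin`) leaves
a point `p = π 0` and a permutation `σ` of `Fin n`. If `p = 0`, then `0` was a fixed point of `π`
and `π` has one cycle more than `σ`; otherwise `π` is obtained from `σ` by splicing `0` into the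
cycle through `p`, and the number of cycles is unchanged. Hence
`∑_π N(π)^s = ∑_σ ((N(σ) + 1)^s + n N(σ)^s)`, which by the binomial theorem reads
`(n + 1) μ_{n+1,s} - n μ_{n,s} = 1 + ∑_{r=1}^s C(s,r) μ_{n,r}`. Telescoping in `n` gives the
recursion; the term `j = 0` vanishes because `μ_{0,r} = 0` for `r ≥ 1`.
-/

open Equiv Equiv.Perm Finset

namespace Equiv.Perm

section

variable {α : Type*} [DecidableEq α]

-- `swap a b * g` follows `g`, except that a step `x ↦ b` becomes the detour `x ↦ a ↦ b`.
theorem sameCycle_swap_mul_apply {g : Perm α} {a b : α} (ha : g a = a) (x : α) :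
    SameCycle (swap a b * g) x (g x) := by
  by_cases hxb : g x = b
  · have hffx : (swap a b * g) ((swap a b * g) x) = g x := by simp [hxb, ha]
    exact hffx ▸ sameCycle_apply_right.2 (sameCycle_apply_right.2 (SameCycle.refl _ x))
  by_cases hxa : g x = a
  · rw [g.injective (hxa.trans ha.symm), ha]
  · have hfx : (swap a b * g) x = g x := swap_apply_of_ne_of_ne hxa hxb
    exact hfx ▸ sameCycle_apply_right.2 (SameCycle.refl _ x)

theorem sameCycle_swap_mul_pow_apply {g : Perm α} {a b : α} (ha : g a = a) (x : α) (i : ℕ) :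
    SameCycle (swap a b * g) x ((g ^ i) x) := by
  induction i with
  | zero => rfl
  | succ i ih => exact ih.trans (pow_succ' g i ▸ sameCycle_swap_mul_apply ha _)

theorem IsCycle.swap_mul_of_apply_eq_self [Finite α] {c : Perm α} (hc : c.IsCycle) {a b : α}
    (ha : c a = a) (hb : c b ≠ b) : (swap a b * c).IsCycle := by
  have hab : a ≠ b := fun h => hb (h ▸ ha)
  have hcb : c b ≠ a := fun h => hab (c.injective (ha.trans h.symm))
  have hfa : (swap a b * c) a = b := by simp [ha]
  have hfb : (swap a b * c) b = c b := swap_apply_of_ne_of_ne hcb hb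
  refine ⟨b, hfb ▸ hb, fun y hy => ?_⟩
  by_cases hya : y = a
  · subst hya
    exact SameCycle.symm ⟨1, by rw [zpow_one, hfa]⟩
  by_cases hcy : c y = y
  · rw [mul_apply, hcy, swap_apply_ne_self_iff] at hy
    rw [hy.2.resolve_left hya]
  obtain ⟨i, rfl⟩ := (hc.sameCycle hb hcy).exists_nat_pow_eq
  exact sameCycle_swap_mul_pow_apply ha b i

variable [Fintype α]

theorem support_swap_mul_of_apply_eq_self {g : Perm α} {a b : α} (ha : g a = a)
    (hab : a ≠ b) : (swap a b * g).support = insert a (insert b g.support) := by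
  ext x
  have hgx : g x = a ↔ x = a := ⟨fun h => g.injective (h.trans ha.symm), fun h => h ▸ ha⟩
  simp only [mem_insert, mem_support, mul_apply, swap_apply_def]
  grind

theorem card_cycleType_swap_mul_of_apply_ne_self {g : Perm α} {a b : α} (ha : g a = a)
    (hb : g b ≠ b) : (swap a b * g).cycleType.card = g.cycleType.card := by
  set c := g.cycleOf b
  have hcmem : c ∈ g.cycleFactorsFinset := cycleOf_mem_cycleFactorsFinset_iff.2 (mem_support.2 hb)
  have hc : c.IsCycle := (mem_cycleFactorsFinset_iff.1 hcmem).1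
  have hcb : c b = g b := cycleOf_apply_self g b
  have hca : c a = a := by
    by_contra h
    exact mem_support.1 (mem_cycleFactorsFinset_support_le hcmem (mem_support.2 h)) ha
  set τ := g * c⁻¹
  have hτc : Disjoint τ c := disjoint_mul_inv_of_mem_cycleFactorsFinset hcmem
  have hg : g = c * τ := by rw [← hτc.commute.eq, inv_mul_cancel_right]
  have hτa : τ a = a := by rw [mul_apply, inv_eq_iff_eq.2 hca.symm, ha]
  have hdisj : Disjoint (swap a b * c) τ := by
    intro x
    by_cases hxa : x = a
    · exact Or.inr (hxa ▸ hτa)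
    refine (hτc x).symm.imp_left fun hcx => ?_
    have hxb : x ≠ b := by rintro rfl; exact hb (hcb ▸ hcx)
    rw [mul_apply, hcx, swap_apply_of_ne_of_ne hxa hxb]
  rw [hg, ← mul_assoc, hdisj.cycleType_mul, hτc.symm.cycleType_mul,
    (hc.swap_mul_of_apply_eq_self hca (hcb ▸ hb)).cycleType, hc.cycleType]
  simp

theorem card_parts_partition_swap_mul {g : Perm α} {a b : α} (ha : g a = a) (hab : a ≠ b) :
    (swap a b * g).partition.parts.card + 1 = g.partition.parts.card := by
  have hsupp := support_swap_mul_of_apply_eq_self ha hab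
  have hle := card_le_univ (swap a b * g).support
  have ha' : a ∉ g.support := notMem_support.2 ha
  simp only [parts_partition, Multiset.card_add, Multiset.card_replicate]
  by_cases hb : g b = b
  · have hb' : b ∉ g.support := notMem_support.2 hb
    have hdisj : Disjoint (swap a b) g := fun x => by
      by_cases hxa : x = a
      · exact Or.inr (hxa ▸ ha)
      by_cases hxb : x = b
      · exact Or.inr (hxb ▸ hb)
      exact Or.inl (swap_apply_of_ne_of_ne hxa hxb)
    rw [hdisj.cycleType_mul, (isCycle_swap hab).cycleType, Multiset.card_add,
      Multiset.card_singleton]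
    rw [hsupp, card_insert_of_notMem (by simp [hab, ha']), card_insert_of_notMem hb'] at hle ⊢
    omega
  · rw [card_cycleType_swap_mul_of_apply_ne_self ha hb]
    rw [hsupp, insert_eq_of_mem (mem_support.2 hb), card_insert_of_notMem ha'] at hle ⊢
    omega

end

theorem card_parts_partition_extendDomain {α β : Type*} [DecidableEq α] [Fintype α]
    [DecidableEq β] [Fintype β] {p : β → Prop} [DecidablePred p] (e : Perm α)
    (f : α ≃ Subtype p) :
    (e.extendDomain f).partition.parts.card + Fintype.card α
      = e.partition.parts.card + Fintype.card β := by
  have hα := card_le_univ e.support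
  have hβ : Fintype.card α ≤ Fintype.card β :=
    Fintype.card_le_of_embedding (f.toEmbedding.trans (Function.Embedding.subtype p))
  simp only [parts_partition, Multiset.card_add, Multiset.card_replicate, cycleType_extendDomain,
    card_support_extend_domain]
  omega

theorem decomposeFin_symm_eq_swap_mul {n : ℕ} (p : Fin (n + 1)) (e : Perm (Fin n)) :
    decomposeFin.symm (p, e) = swap 0 p * e.extendDomain (finSuccAboveEquiv 0) := by
  ext x
  refine Fin.cases ?_ (fun i => ?_) x
  · simp [extendDomain_apply_not_subtype]
  · have hi : (finSuccAboveEquiv (0 : Fin (n + 1))).symm ⟨i.succ, i.succ_ne_zero⟩ = i :=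
      (finSuccAboveEquiv 0).symm_apply_eq.2 (Subtype.ext (by simp [finSuccAboveEquiv_apply]))
    simp [extendDomain_apply_subtype, hi, finSuccAboveEquiv_apply]

end Equiv.Perm

theorem numCycles_eq_card_parts_partition {n : ℕ} (π : Perm (Fin n)) :
    numCycles π = π.partition.parts.card := by
  simp [numCycles, parts_partition]

theorem numCycles_decomposeFin_symm {n : ℕ} (p : Fin (n + 1)) (e : Perm (Fin n)) :
    numCycles (decomposeFin.symm (p, e)) = numCycles e + if p = 0 then 1 else 0 := by
  have hext := card_parts_partition_extendDomain e (finSuccAboveEquiv 0)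
  have hfix : e.extendDomain (finSuccAboveEquiv 0) 0 = 0 :=
    extendDomain_apply_not_subtype _ _ (by simp)
  simp only [Fintype.card_fin] at hext
  rw [numCycles_eq_card_parts_partition, numCycles_eq_card_parts_partition,
    decomposeFin_symm_eq_swap_mul]
  split_ifs with hp
  · rw [hp, swap_self, ← Perm.one_def, one_mul]
    omega
  · have := card_parts_partition_swap_mul hfix (Ne.symm hp)
    omega

theorem sum_perm_fin_succ_comp_numCycles {M : Type*} [AddCommMonoid M] (n : ℕ) (f : ℕ → M) :
    ∑ π : Perm (Fin (n + 1)), f (numCycles π)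
      = ∑ σ : Perm (Fin n), (f (numCycles σ + 1) + n • f (numCycles σ)) := by
  rw [← decomposeFin.symm.sum_comp, Fintype.sum_prod_type, Fin.sum_univ_succ]
  simp only [numCycles_decomposeFin_symm, Fin.succ_ne_zero, if_true, if_false, add_zero, sum_const,
    card_univ, Fintype.card_fin, sum_add_distrib, smul_sum]

theorem cycMoment_zero_right (n : ℕ) : cycMoment n 0 = 1 := by
  simp [cycMoment, Fintype.card_perm, Nat.factorial_ne_zero]

theorem cycMoment_zero_left {r : ℕ} (hr : r ≠ 0) : cycMoment 0 r = 0 := by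
  simp [cycMoment, numCycles, hr]

theorem succ_mul_cycMoment_succ (n s : ℕ) :
    (n + 1) * cycMoment (n + 1) s
      = n * cycMoment n s + (1 + ∑ r ∈ Icc 1 s, (s.choose r : ℝ) * cycMoment n r) := by
  have hsum : ∀ r, ∑ σ : Perm (Fin n), (numCycles σ : ℝ) ^ r = n.factorial * cycMoment n r :=
    fun r => by
      rw [cycMoment, mul_div_cancel₀ _ (Nat.cast_ne_zero.2 n.factorial_ne_zero)]
  have hsplit : ∑ r ∈ range (s + 1), (s.choose r : ℝ) * cycMoment n r
      = 1 + ∑ r ∈ Icc 1 s, (s.choose r : ℝ) * cycMoment n r := by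
    rw [range_eq_Ico, sum_eq_sum_Ico_succ_bot (by omega : 0 < s + 1), zero_add,
      Ico_add_one_right_eq_Icc]
    simp [cycMoment_zero_right]
  have hbinom : ∑ π : Perm (Fin (n + 1)), (numCycles π : ℝ) ^ s
      = n.factorial *
          (∑ r ∈ range (s + 1), (s.choose r : ℝ) * cycMoment n r + n * cycMoment n s) := by
    rw [sum_perm_fin_succ_comp_numCycles n (fun k => (k : ℝ) ^ s)]
    simp only [Nat.cast_add, Nat.cast_one, add_pow, one_pow, mul_one, sum_add_distrib,
      nsmul_eq_mul, ← mul_sum, sum_comm (s := univ), ← sum_mul, hsum]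
    rw [mul_add, mul_sum, mul_left_comm]
    exact congrArg (· + _) (sum_congr rfl fun r _ => by ring)
  rw [cycMoment, hbinom, Nat.factorial_succ, Nat.cast_mul, Nat.cast_succ, ← hsplit]
  field_simp
  ring

theorem natCast_mul_cycMoment (n s : ℕ) :
    n * cycMoment n s
      = n + ∑ r ∈ Icc 1 s, ∑ j ∈ Icc 1 (n - 1), (s.choose r : ℝ) * cycMoment j r := by
  have hstep : ∀ j : ℕ, (j + 1 : ℕ) * cycMoment (j + 1) s - j * cycMoment j s
      = 1 + ∑ r ∈ Icc 1 s, (s.choose r : ℝ) * cycMoment j r := fun j => by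
    rw [Nat.cast_succ, succ_mul_cycMoment_succ]
    ring
  have hzero : ∀ r ∈ Icc 1 s, ∀ j ∈ range n, j ∉ Icc 1 (n - 1) →
      (s.choose r : ℝ) * cycMoment j r = 0 := fun r hr j hj hj' => by
    obtain rfl : j = 0 := by simp only [mem_Icc, mem_range] at hj hj'; omega
    rw [cycMoment_zero_left (by simp at hr; omega), mul_zero]
  calc (n : ℝ) * cycMoment n s
      = ∑ j ∈ range n, ((j + 1 : ℕ) * cycMoment (j + 1) s - j * cycMoment j s) := by
        rw [sum_range_sub (fun j => (j : ℝ) * cycMoment j s)]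
        simp
    _ = ∑ j ∈ range n, (1 + ∑ r ∈ Icc 1 s, (s.choose r : ℝ) * cycMoment j r) :=
        sum_congr rfl fun j _ => hstep j
    _ = n + ∑ r ∈ Icc 1 s, ∑ j ∈ range n, (s.choose r : ℝ) * cycMoment j r := by
        rw [sum_add_distrib, sum_comm]
        simp
    _ = n + ∑ r ∈ Icc 1 s, ∑ j ∈ Icc 1 (n - 1), (s.choose r : ℝ) * cycMoment j r := by
        congr 1
        refine sum_congr rfl fun r hr => (sum_subset (fun j hj => ?_) (hzero r hr)).symm
        simp only [mem_Icc, mem_range] at hj ⊢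
        omega

theorem cycMoment_recursion_general (n s : ℕ) (hn : 1 ≤ n) :
    cycMoment n s = 1 + (1 / n : ℝ) *
      ∑ r ∈ Finset.Icc 1 s, ∑ j ∈ Finset.Icc 1 (n - 1),
        (s.choose r : ℝ) * cycMoment j r := by
  have hn0 : (n : ℝ) ≠ 0 := Nat.cast_ne_zero.2 (Nat.one_le_iff_ne_zero.1 hn)
  field_simp
  linarith [natCast_mul_cycMoment n s]

/-- Recursion for the cycle moments:
`μ_{n,s} = 1 + (1/n) ∑_{r=1}^{s} ∑_{j=1}^{n-1} C(s,r) μ_{j,r}`. -/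
theorem cycMoment_recursion (n s : ℕ) (hn : 1 ≤ n) (hs : 1 ≤ s) :
    cycMoment n s = 1 + (1 / n : ℝ) *
      ∑ r ∈ Finset.Icc 1 s, ∑ j ∈ Finset.Icc 1 (n - 1),
        (s.choose r : ℝ) * cycMoment j r :=
  cycMoment_recursion_general n s hn
end

section
/- The sequence M_n := H_n − Σ_{i=1}^{n} 1/i² is the unique sequence satisfying a_1 = 0 and a_n = 1 + (1/n) Σ_{i=1}^{n-1} a_i − H_n/n for all n ≥ 2, where H_n = Σ_{j=1}^{n} 1/j. -/
/-- `H_n`, the `n`-th harmonic number. -/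
noncomputable def harmonicNum (n : ℕ) : ℝ := ∑ j ∈ Finset.Icc 1 n, (1 : ℝ) / j

/-- `M_n := H_n − ∑_{i=1}^n 1/i²`. -/
noncomputable def Mseq (n : ℕ) : ℝ :=
  harmonicNum n - ∑ i ∈ Finset.Icc 1 n, (1 : ℝ) / (i : ℝ) ^ 2

/-!
Uniqueness holds because the recursion determines `a_n` from `a_1, …, a_{n-1}`. For existence,
write `M_n = ∑_{j ≤ n} f j` with `f j = 1/j − 1/j²`; swapping the order of summation gives
`∑_{i ≤ m} M_i = (m + 1) M_m − ∑_{j ≤ m} j f j = (m + 1) M_m − m + H_m`, and substituting this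
into the recursion at `n = m + 1` leaves `M_{m+1} = M_m + 1/(m+1) − 1/(m+1)²`.
-/

open Finset

theorem eq_of_sum_Icc_recursion {R : Type*} [AddCommMonoid R] (F : ℕ → R → R) {a b : ℕ → R}
    (h₁ : a 1 = b 1) (ha : ∀ n, 2 ≤ n → a n = F n (∑ i ∈ Icc 1 (n - 1), a i))
    (hb : ∀ n, 2 ≤ n → b n = F n (∑ i ∈ Icc 1 (n - 1), b i)) :
    ∀ n, 1 ≤ n → a n = b n := by
  intro n hn
  induction n using Nat.strong_induction_on with
  | _ n ih =>
    obtain rfl | hn₂ := hn.eq_or_lt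
    · exact h₁
    · rw [ha n hn₂, hb n hn₂]
      congr 1
      exact sum_congr rfl fun i hi => ih i (by grind) (mem_Icc.mp hi).1

theorem sum_Icc_sum_Icc {R : Type*} [CommRing R] (f : ℕ → R) (m : ℕ) :
    ∑ i ∈ Icc 1 m, ∑ j ∈ Icc 1 i, f j
      = (m + 1) * ∑ j ∈ Icc 1 m, f j - ∑ j ∈ Icc 1 m, j * f j := by
  induction m with
  | zero => simp
  | succ m ih =>
    simp only [sum_Icc_succ_top (Nat.le_add_left 1 m), ih]
    push_cast
    ring

theorem harmonicNum_succ (m : ℕ) : harmonicNum (m + 1) = harmonicNum m + 1 / (m + 1) := by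
  rw [harmonicNum, sum_Icc_succ_top (Nat.le_add_left 1 m), ← harmonicNum, Nat.cast_succ]

theorem Mseq_eq_sum (n : ℕ) : Mseq n = ∑ j ∈ Icc 1 n, (1 / (j : ℝ) - 1 / (j : ℝ) ^ 2) := by
  rw [Mseq, harmonicNum, sum_sub_distrib]

theorem Mseq_one : Mseq 1 = 0 := by
  simp [Mseq_eq_sum]

theorem Mseq_succ (m : ℕ) : Mseq (m + 1) = Mseq m + 1 / (m + 1) - 1 / (m + 1) ^ 2 := by
  rw [Mseq_eq_sum, Mseq_eq_sum, sum_Icc_succ_top (Nat.le_add_left 1 m), Nat.cast_succ]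
  ring

theorem sum_Icc_Mseq (m : ℕ) :
    ∑ i ∈ Icc 1 m, Mseq i = (m + 1) * Mseq m - m + harmonicNum m := by
  have hweighted : ∑ j ∈ Icc 1 m, (j : ℝ) * (1 / j - 1 / j ^ 2) = m - harmonicNum m :=
    calc ∑ j ∈ Icc 1 m, (j : ℝ) * (1 / j - 1 / j ^ 2)
        = ∑ j ∈ Icc 1 m, (1 - 1 / (j : ℝ)) := sum_congr rfl fun j hj => by
          have : (j : ℝ) ≠ 0 := by exact_mod_cast (Nat.one_le_iff_ne_zero.mp (mem_Icc.mp hj).1)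
          field_simp
      _ = m - harmonicNum m := by simp [sum_sub_distrib, harmonicNum]
  simp only [Mseq_eq_sum]
  rw [sum_Icc_sum_Icc, hweighted]
  ring

theorem Mseq_recursion (n : ℕ) (hn : 2 ≤ n) :
    Mseq n = 1 + (1 / n : ℝ) * ∑ i ∈ Icc 1 (n - 1), Mseq i - harmonicNum n / n := by
  obtain ⟨m, rfl⟩ : ∃ m, n = m + 1 := ⟨n - 1, by omega⟩
  rw [Nat.add_sub_cancel, sum_Icc_Mseq, Mseq_succ, harmonicNum_succ, Nat.cast_succ]
  field_simp
  ring

/-- `M_n = H_n − ∑_{i=1}^n 1/i²` is the unique sequence satisfying `a_1 = 0` and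
`a_n = 1 + (1/n) ∑_{i=1}^{n-1} a_i − H_n/n` for all `n ≥ 2`. -/
theorem Mseq_unique_recursion :
    (Mseq 1 = 0 ∧
      ∀ n : ℕ, 2 ≤ n →
        Mseq n = 1 + (1 / n : ℝ) * ∑ i ∈ Finset.Icc 1 (n - 1), Mseq i
          - harmonicNum n / n) ∧
    ∀ a : ℕ → ℝ, a 1 = 0 →
      (∀ n : ℕ, 2 ≤ n →
        a n = 1 + (1 / n : ℝ) * ∑ i ∈ Finset.Icc 1 (n - 1), a i - harmonicNum n / n) →
      ∀ n : ℕ, 1 ≤ n → a n = Mseq n :=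
  ⟨⟨Mseq_one, Mseq_recursion⟩, fun _ ha₁ ha =>
    eq_of_sum_Icc_recursion (fun n s => 1 + (1 / n : ℝ) * s - harmonicNum n / n)
      (ha₁.trans Mseq_one.symm) ha Mseq_recursion⟩
end

section
/- Let d = 2, 0 < ε < 1, and for each m let b_m be the minimum size of an ε-representative code of {1,...,m}² under a weight function w with values in [1,β] defined on all of ℕ², satisfying the coordinatewise monotonicity: if u and v differ only in one coordinate and u has the larger coordinate, then w(u) ≤ w(v). Then for m = kr + s with 0 ≤ s ≤ r−1 one has b_m ≤ k²·b_r + (2k+1)·r². -/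
/-- The square grid `{1,…,m}² ⊆ ℕ²`. -/
def grid (m : ℕ) : Finset (ℕ × ℕ) := Finset.Icc 1 m ×ˢ Finset.Icc 1 m

/-- `B` is an `ε`-representative code of the grid `{1,…,m}²` for the weight
function `w`: `B ⊆ {1,…,m}²` and `B` meets every subset of the grid of total
weight at least `ε m²`. -/
def IsGridRep (w : ℕ × ℕ → ℝ) (ε : ℝ) (m : ℕ) (B : Finset (ℕ × ℕ)) : Prop :=
  B ⊆ grid m ∧
    ∀ U ⊆ grid m, ε * (m : ℝ) ^ 2 ≤ ∑ v ∈ U, w v → (B ∩ U).Nonempty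

/-- `b_m`: the minimum size of an `ε`-representative code of `{1,…,m}²`. -/
noncomputable def minRep (w : ℕ × ℕ → ℝ) (ε : ℝ) (m : ℕ) : ℕ :=
  sInf {c : ℕ | ∃ B : Finset (ℕ × ℕ), IsGridRep w ε m B ∧ B.card = c}

/-!
Tile `{1,…,kr}²` by the `k²` translates `r • (a, b) +ᵥ {1,…,r}²` with `a, b < k`, put a
translate of an optimal code of `{1,…,r}²` in each of them, and add every point of the strip
`{1,…,m}² \ {1,…,kr}²`, of which there are at most `(2k+1) r²`. A set of weight `≥ ε m²` missing
the strip lies in `{1,…,kr}²`, so by pigeonhole it has weight `≥ ε r²` inside one block; since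
`w` is antitone, translating that part back to `{1,…,r}²` does not decrease its weight, so it meets
the optimal code there.
-/

open Finset
open scoped Pointwise

lemma mem_grid {n : ℕ} {v : ℕ × ℕ} : v ∈ grid n ↔ 1 ≤ v.1 ∧ v.1 ≤ n ∧ 1 ≤ v.2 ∧ v.2 ≤ n := by
  simp [grid, and_assoc]

lemma grid_mono {m n : ℕ} (h : n ≤ m) : grid n ⊆ grid m := fun v hv => by
  rw [mem_grid] at hv ⊢
  omega

lemma card_grid (n : ℕ) : #(grid n) = n ^ 2 := by
  simp [grid, sq]

lemma card_grid_sdiff_grid {m n : ℕ} (h : n ≤ m) : #(grid m \ grid n) = m ^ 2 - n ^ 2 := by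
  rw [card_sdiff_of_subset (grid_mono h), card_grid, card_grid]

/-- The block `r • (a, b) +ᵥ {1,…,r}²` containing `v` has index `(a, b) = blockIndex r v`. -/
def blockIndex (r : ℕ) (v : ℕ × ℕ) : ℕ × ℕ := ((v.1 - 1) / r, (v.2 - 1) / r)

lemma blockIndex_mem {k r : ℕ} {v : ℕ × ℕ} (hv : v ∈ grid (k * r)) :
    blockIndex r v ∈ range k ×ˢ range k := by
  rw [mem_grid] at hv
  simp only [blockIndex, mem_product, mem_range]
  constructor <;> exact Nat.div_lt_of_lt_mul (by rw [mul_comm]; omega)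

lemma mem_vadd_grid_blockIndex {n r : ℕ} (hr : 0 < r) {v : ℕ × ℕ} (hv : v ∈ grid n) :
    v ∈ r • blockIndex r v +ᵥ grid r := by
  rw [mem_grid] at hv
  refine mem_vadd_finset.2 ⟨v - r • blockIndex r v, ?_, ?_⟩
  · have h₁ := Nat.div_add_mod (v.1 - 1) r
    have h₂ := Nat.div_add_mod (v.2 - 1) r
    have := Nat.mod_lt (v.1 - 1) hr
    have := Nat.mod_lt (v.2 - 1) hr
    simp only [mem_grid, blockIndex, Prod.fst_sub, Prod.snd_sub, Prod.smul_fst, Prod.smul_snd,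
      smul_eq_mul]
    omega
  · have h₁ := Nat.div_mul_le_self (v.1 - 1) r
    have h₂ := Nat.div_mul_le_self (v.2 - 1) r
    ext <;> simp only [blockIndex, vadd_eq_add, Prod.fst_add, Prod.snd_add, Prod.fst_sub,
      Prod.snd_sub, Prod.smul_fst, Prod.smul_snd, smul_eq_mul] <;> rw [mul_comm] <;> omega

lemma vadd_grid_subset_grid {k r : ℕ} {ab : ℕ × ℕ} (hab : ab ∈ range k ×ˢ range k) :
    r • ab +ᵥ grid r ⊆ grid (k * r) := by
  intro v hv
  obtain ⟨p, hp, rfl⟩ := mem_vadd_finset.1 hv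
  simp only [mem_product, mem_range] at hab
  rw [mem_grid] at hp ⊢
  have h₁ : r * ab.1 + r ≤ k * r := by nlinarith
  have h₂ : r * ab.2 + r ≤ k * r := by nlinarith
  simp only [vadd_eq_add, Prod.fst_add, Prod.snd_add, Prod.smul_fst, Prod.smul_snd, smul_eq_mul]
  omega

def tileCode (k r : ℕ) (B : Finset (ℕ × ℕ)) : Finset (ℕ × ℕ) :=
  (range k ×ˢ range k).biUnion fun ab => r • ab +ᵥ B

lemma card_tileCode_le (k r : ℕ) (B : Finset (ℕ × ℕ)) : #(tileCode k r B) ≤ k ^ 2 * #B :=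
  calc #(tileCode k r B)
      ≤ ∑ ab ∈ range k ×ˢ range k, #(r • ab +ᵥ B) := card_biUnion_le
    _ ≤ ∑ _ab ∈ range k ×ˢ range k, #B := sum_le_sum fun _ _ => card_vadd_finset_le
    _ = k ^ 2 * #B := by simp [sq]

section IsGridRep

variable {w : ℕ × ℕ → ℝ} {ε : ℝ}

lemma isGridRep_grid (hε : 0 < ε) {n : ℕ} (hn : 1 ≤ n) : IsGridRep w ε n (grid n) := by
  refine ⟨subset_rfl, fun U hU hsum => ?_⟩
  rw [inter_eq_right.2 hU, nonempty_iff_ne_empty]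
  rintro rfl
  have : (0 : ℝ) < ε * (n : ℝ) ^ 2 := by positivity
  simp only [sum_empty] at hsum
  linarith

lemma minRep_le_card {m : ℕ} {B : Finset (ℕ × ℕ)} (hB : IsGridRep w ε m B) :
    minRep w ε m ≤ #B :=
  Nat.sInf_le ⟨B, hB, rfl⟩

lemma exists_isGridRep_card_eq_minRep {m : ℕ} {B : Finset (ℕ × ℕ)} (hB : IsGridRep w ε m B) :
    ∃ B', IsGridRep w ε m B' ∧ #B' = minRep w ε m :=
  Nat.sInf_mem (s := {c | ∃ B, IsGridRep w ε m B ∧ #B = c}) ⟨#B, B, hB, rfl⟩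

lemma IsGridRep.vadd_inter_nonempty (hw : Antitone w) {r : ℕ} {B : Finset (ℕ × ℕ)}
    (hB : IsGridRep w ε r B) (c : ℕ × ℕ) {U : Finset (ℕ × ℕ)} (hU : U ⊆ c +ᵥ grid r)
    (hsum : ε * (r : ℝ) ^ 2 ≤ ∑ v ∈ U, w v) : ((c +ᵥ B) ∩ U).Nonempty := by
  set U₀ := (grid r).filter (fun p => c + p ∈ U)
  have hU₀ : c +ᵥ U₀ = U := by
    ext v
    simp only [mem_vadd_finset, mem_filter, U₀, vadd_eq_add]
    constructor
    · rintro ⟨p, ⟨-, hp⟩, rfl⟩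
      exact hp
    · intro hv
      obtain ⟨p, hp, rfl⟩ := mem_vadd_finset.1 (hU hv)
      exact ⟨p, ⟨hp, hv⟩, rfl⟩
  have hle : ∑ v ∈ U, w v ≤ ∑ p ∈ U₀, w p := by
    rw [← hU₀, vadd_finset_def, sum_image fun p _ q _ h => by simpa using h]
    exact sum_le_sum fun p _ => hw le_add_self
  obtain ⟨p, hp⟩ := hB.2 U₀ (filter_subset _ _) (hsum.trans hle)
  obtain ⟨hpB, hpU₀⟩ := mem_inter.1 hp
  exact ⟨c + p, mem_inter.2 ⟨vadd_mem_vadd_finset hpB, (mem_filter.1 hpU₀).2⟩⟩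

lemma IsGridRep.tileCode (hw : Antitone w) {k r : ℕ} (hk : 0 < k) (hr : 0 < r)
    {B : Finset (ℕ × ℕ)} (hB : IsGridRep w ε r B) :
    IsGridRep w ε (k * r) (tileCode k r B) := by
  refine ⟨biUnion_subset.2 fun ab hab =>
    (vadd_finset_subset_vadd_finset hB.1).trans (vadd_grid_subset_grid hab), fun U hU hsum => ?_⟩
  have hcard : #(range k ×ˢ range k) • (ε * (r : ℝ) ^ 2) = ε * ((k * r : ℕ) : ℝ) ^ 2 := by
    simp only [card_product, card_range, nsmul_eq_mul]
    push_cast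
    ring
  obtain ⟨ab, hab, hblock⟩ := exists_le_sum_fiber_of_maps_to_of_nsmul_le_sum
    (fun v hv => blockIndex_mem (hU hv)) ⟨(0, 0), by simpa using hk⟩ (hcard.trans_le hsum)
  have hsub : {v ∈ U | blockIndex r v = ab} ⊆ r • ab +ᵥ grid r := fun v hv => by
    obtain ⟨hvU, rfl⟩ := mem_filter.1 hv
    exact mem_vadd_grid_blockIndex hr (hU hvU)
  obtain ⟨v, hv⟩ := hB.vadd_inter_nonempty hw _ hsub hblock
  obtain ⟨hvB, hvU⟩ := mem_inter.1 hv
  exact ⟨v, mem_inter.2 ⟨mem_biUnion.2 ⟨ab, hab, hvB⟩, (mem_filter.1 hvU).1⟩⟩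

lemma IsGridRep.union_grid_sdiff (hε : 0 ≤ ε) {m n : ℕ} (hnm : n ≤ m) {B : Finset (ℕ × ℕ)}
    (hB : IsGridRep w ε n B) : IsGridRep w ε m (B ∪ (grid m \ grid n)) := by
  refine ⟨union_subset (hB.1.trans (grid_mono hnm)) sdiff_subset, fun U hU hsum => ?_⟩
  by_cases hstrip : (U ∩ (grid m \ grid n)).Nonempty
  · obtain ⟨v, hv⟩ := hstrip
    obtain ⟨hvU, hvs⟩ := mem_inter.1 hv
    exact ⟨v, mem_inter.2 ⟨mem_union_right _ hvs, hvU⟩⟩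
  have hUn : U ⊆ grid n := fun v hv => by
    by_contra hvn
    exact hstrip ⟨v, mem_inter.2 ⟨hv, mem_sdiff.2 ⟨hU hv, hvn⟩⟩⟩
  have hscale : ε * (n : ℝ) ^ 2 ≤ ε * (m : ℝ) ^ 2 := by gcongr
  obtain ⟨v, hv⟩ := hB.2 U hUn (hscale.trans hsum)
  obtain ⟨hvB, hvU⟩ := mem_inter.1 hv
  exact ⟨v, mem_inter.2 ⟨mem_union_left _ hvB, hvU⟩⟩

end IsGridRep

lemma add_sq_sub_sq_le {k r s : ℕ} (hs : s ≤ r) :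
    (k * r + s) ^ 2 - (k * r) ^ 2 ≤ (2 * k + 1) * r ^ 2 := by
  have : k * r * s ≤ k * r * r := Nat.mul_le_mul_left _ hs
  have : s * s ≤ r * r := Nat.mul_le_mul hs hs
  rw [Nat.sub_le_iff_le_add]
  nlinarith

theorem minRep_subadditive_general (ε : ℝ) (hε0 : 0 < ε) (w : ℕ × ℕ → ℝ)
    (hmono1 : ∀ x x' y : ℕ, x ≤ x' → w (x', y) ≤ w (x, y))
    (hmono2 : ∀ x y y' : ℕ, y ≤ y' → w (x, y') ≤ w (x, y))
    (k r s : ℕ) (hk : 1 ≤ k) (hr : 1 ≤ r) (hs : s ≤ r - 1) :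
    minRep w ε (k * r + s) ≤ k ^ 2 * minRep w ε r + (2 * k + 1) * r ^ 2 := by
  have hw : Antitone w :=
    antitone_prod_iff.2 ⟨fun x _ _ h => hmono2 x _ _ h, fun y _ _ h => hmono1 _ _ y h⟩
  obtain ⟨B, hB, hBcard⟩ := exists_isGridRep_card_eq_minRep (isGridRep_grid (w := w) hε0 hr)
  have hcode := (hB.tileCode hw hk hr).union_grid_sdiff hε0.le (m := k * r + s) (by omega)
  calc minRep w ε (k * r + s)
      ≤ #(tileCode k r B ∪ (grid (k * r + s) \ grid (k * r))) := minRep_le_card hcode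
    _ ≤ #(tileCode k r B) + #(grid (k * r + s) \ grid (k * r)) := card_union_le _ _
    _ ≤ k ^ 2 * minRep w ε r + (2 * k + 1) * r ^ 2 := by
      rw [card_grid_sdiff_grid (by omega), ← hBcard]
      exact add_le_add (card_tileCode_le k r B) (add_sq_sub_sq_le (by omega))

/-- For a coordinatewise non-increasing weight function with values in `[1,β]`
and `m = k r + s` with `0 ≤ s ≤ r − 1`, `b_m ≤ k² b_r + (2k+1) r²`. -/
theorem minRep_subadditive (β ε : ℝ) (hβ : 1 ≤ β) (hε0 : 0 < ε) (hε1 : ε < 1)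
    (w : ℕ × ℕ → ℝ) (hw : ∀ v, 1 ≤ w v ∧ w v ≤ β)
    (hmono1 : ∀ x x' y : ℕ, x ≤ x' → w (x', y) ≤ w (x, y))
    (hmono2 : ∀ x y y' : ℕ, y ≤ y' → w (x, y') ≤ w (x, y))
    (k r s : ℕ) (hk : 1 ≤ k) (hr : 1 ≤ r) (hs : s ≤ r - 1) :
    minRep w ε (k * r + s) ≤ k ^ 2 * minRep w ε r + (2 * k + 1) * r ^ 2 :=
  minRep_subadditive_general ε hε0 w hmono1 hmono2 k r s hk hr hs
end

section
/- Let (b_m)_{m≥1} be a sequence of nonnegative reals such that for all r ≥ 1 and all m = kr + s with k ≥ 1, 0 ≤ s ≤ r−1, one has b_m ≤ k² b_r + (2k+1) r². Then b_m/m² converges as m → ∞ to inf_r b_r/r². -/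
/-!
Fix `r` and write `m = k r + s` with `k = m / r`. The hypothesis gives
`b m / m² ≤ b r / r² + (2k + 1) / k² ≤ b r / r² + 3 / k`, so every value `b r / r²` bounds the
tail of `b m / m²` up to an error vanishing as `m → ∞`, while the infimum bounds it from below.
-/

open Filter Topology

def ApproxSubadditive (b : ℕ → ℝ) : Prop :=
  ∀ r k s : ℕ, 1 ≤ r → 1 ≤ k → s ≤ r - 1 →
    b (k * r + s) ≤ (k : ℝ) ^ 2 * b r + (2 * k + 1) * (r : ℝ) ^ 2

lemma two_mul_add_one_div_sq_le {k : ℝ} (hk : 1 ≤ k) : (2 * k + 1) / k ^ 2 ≤ 3 / k := by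
  rw [div_le_div_iff₀ (by positivity) (by positivity)]
  nlinarith

namespace ApproxSubadditive

variable {b : ℕ → ℝ}

lemma div_sq_le (hsub : ApproxSubadditive b) (hb0 : ∀ r, 0 ≤ b r) {r m : ℕ}
    (hr : 1 ≤ r) (hrm : r ≤ m) :
    b m / (m : ℝ) ^ 2 ≤ b r / (r : ℝ) ^ 2 + 3 / ((m / r : ℕ) : ℝ) := by
  set k := m / r
  have hk : 1 ≤ k := Nat.div_pos hrm hr
  have hs : m % r ≤ r - 1 := Nat.le_sub_one_of_lt (Nat.mod_lt m hr)
  have hm : k * r + m % r = m := Nat.div_add_mod' m r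
  have hkr : (k : ℝ) * r ≤ m := by exact_mod_cast hm ▸ Nat.le_add_right (k * r) (m % r)
  have hk' : (1 : ℝ) ≤ k := by exact_mod_cast hk
  have hbr := hb0 r
  calc b m / (m : ℝ) ^ 2
      ≤ ((k : ℝ) ^ 2 * b r + (2 * k + 1) * (r : ℝ) ^ 2) / (m : ℝ) ^ 2 := by
        gcongr
        exact hm ▸ hsub r k (m % r) hr hk hs
    _ ≤ ((k : ℝ) ^ 2 * b r + (2 * k + 1) * (r : ℝ) ^ 2) / ((k : ℝ) * r) ^ 2 := by
        gcongr
    _ = b r / (r : ℝ) ^ 2 + (2 * k + 1) / (k : ℝ) ^ 2 := by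
        field_simp
    _ ≤ b r / (r : ℝ) ^ 2 + 3 / k := add_le_add_right (two_mul_add_one_div_sq_le hk') _

lemma eventually_div_sq_lt (hsub : ApproxSubadditive b) (hb0 : ∀ r, 0 ≤ b r) {r : ℕ}
    (hr : 1 ≤ r) {a : ℝ} (ha : b r / (r : ℝ) ^ 2 < a) :
    ∀ᶠ m : ℕ in atTop, b m / (m : ℝ) ^ 2 < a := by
  have hbound : Tendsto (fun m : ℕ => b r / (r : ℝ) ^ 2 + 3 / ((m / r : ℕ) : ℝ)) atTop
      (𝓝 (b r / (r : ℝ) ^ 2)) := by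
    have hquot := (tendsto_natCast_atTop_atTop (R := ℝ)).comp
      (Nat.tendsto_div_const_atTop (by omega : r ≠ 0))
    simpa using tendsto_const_nhds.add (hquot.const_div_atTop 3)
  filter_upwards [hbound.eventually (gt_mem_nhds ha), eventually_ge_atTop r] with m hm hrm
  exact (div_sq_le hsub hb0 hr hrm).trans_lt hm

end ApproxSubadditive

lemma iInf_le_div_sq {b : ℕ → ℝ} (hb0 : ∀ m, 0 ≤ b m) {m : ℕ} (hm : 1 ≤ m) :
    ⨅ r : ℕ, b (r + 1) / ((r : ℝ) + 1) ^ 2 ≤ b m / (m : ℝ) ^ 2 := by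
  obtain ⟨n, rfl⟩ := Nat.exists_eq_add_of_le' hm
  have hbdd : BddBelow (Set.range fun r : ℕ => b (r + 1) / ((r : ℝ) + 1) ^ 2) :=
    ⟨0, by rintro _ ⟨r, rfl⟩; have := hb0 (r + 1); positivity⟩
  exact_mod_cast ciInf_le hbdd n

/-- Fekete-type convergence: if a nonnegative sequence satisfies
`b_{kr+s} ≤ k² b_r + (2k+1) r²` for all `r ≥ 1`, `k ≥ 1`, `0 ≤ s ≤ r−1`,
then `b_m/m²` converges to `inf_{r ≥ 1} b_r/r²`. -/
theorem subadditive_convergence (b : ℕ → ℝ) (hb0 : ∀ m, 0 ≤ b m)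
    (hsub : ∀ r k s : ℕ, 1 ≤ r → 1 ≤ k → s ≤ r - 1 →
      b (k * r + s) ≤ (k : ℝ) ^ 2 * b r + (2 * k + 1) * (r : ℝ) ^ 2) :
    Filter.Tendsto (fun m : ℕ => b m / (m : ℝ) ^ 2) Filter.atTop
      (nhds (⨅ r : ℕ, b (r + 1) / ((r : ℝ) + 1) ^ 2)) := by
  refine tendsto_order.2 ⟨fun a ha => ?_, fun a ha => ?_⟩
  · filter_upwards [eventually_ge_atTop 1] with m hm
    exact ha.trans_le (iInf_le_div_sq hb0 hm)
  · obtain ⟨r, hr⟩ := exists_lt_of_ciInf_lt ha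
    exact ApproxSubadditive.eventually_div_sq_lt hsub hb0 (Nat.le_add_left 1 r)
      (by exact_mod_cast hr)
end
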